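/- arXiv:2507.22489 — 2 statements merged into one kernel-verified Lean document; each statement's English description precedes it below -/
import Mathlib

section
/- Let λ = (1, ζ, ζ², −2, 3) with ζ a primitive third root of unity. The six vectors (0,0,0,3,2), (0,1,1,1,1), (0,3,3,0,1), (1,0,0,2,1), (1,1,1,0,0), (2,0,0,1,0) all belong to M_λ = { α ∈ ℕ⁵ : ⟨λ,α⟩ = 0 }, and each of them is irreducible in M_λ, i.e., cannot be written as a sum of two nonzero elements of M_λ. -/
/-!
Writing `ζ² = -1 - ζ`, the pairing `⟨λ, α⟩` equals `(α₁ - α₃ - 2α₄ + 3α₅) + (α₂ - α₃) ζ`, and since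
`ζ` is not real, `1` and `ζ` are linearly independent over `ℝ`; so `M_λ` is the monoid of natural
solutions of two linear equations. A summand of `v` lies in the box below `v`, so irreducibility
is the finite check that the only solutions in that box are `0` and `v`.
-/

theorem IsPrimitiveRoot.sq_add_self_add_one {R : Type*} [CommRing R] [IsDomain R] {ζ : R}
    (hζ : IsPrimitiveRoot ζ 3) : ζ ^ 2 + ζ + 1 = 0 := by
  have h := hζ.geom_sum_eq_zero (by norm_num)
  simp only [Finset.sum_range_succ, Finset.sum_range_zero, pow_zero, pow_one] at h
  linear_combination h

theorem IsPrimitiveRoot.im_ne_zero_of_three {ζ : ℂ} (hζ : IsPrimitiveRoot ζ 3) : ζ.im ≠ 0 := by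
  intro him
  have hre := congrArg Complex.re hζ.sq_add_self_add_one
  simp only [pow_two, Complex.add_re, Complex.mul_re, him, Complex.one_re, Complex.zero_re] at hre
  nlinarith [sq_nonneg (2 * ζ.re + 1)]

theorem Complex.ofReal_add_ofReal_mul_eq_zero_iff {z : ℂ} (hz : z.im ≠ 0) (a b : ℝ) :
    (a : ℂ) + b * z = 0 ↔ a = 0 ∧ b = 0 := by
  refine ⟨fun h => ?_, fun ⟨ha, hb⟩ => by simp [ha, hb]⟩
  have hb : b = 0 := by
    simpa [hz] using congrArg Complex.im h
  refine ⟨?_, hb⟩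
  simpa [hb] using h

/-- The system `α₁ − α₃ − 2α₄ + 3α₅ = 0, α₂ = α₃`, with `0`-based indices and the subtraction
moved across so that it is an equation in `ℕ`. -/
def SolvesSystem (α : Fin 5 → ℕ) : Prop :=
  α 0 + 3 * α 4 = α 2 + 2 * α 3 ∧ α 1 = α 2

instance : DecidablePred SolvesSystem := fun _ => inferInstanceAs (Decidable (_ ∧ _))

theorem pairing_eq_zero_iff_solvesSystem {ζ : ℂ} (hζ : IsPrimitiveRoot ζ 3) (α : Fin 5 → ℕ) :
    ∑ i : Fin 5, ![1, ζ, ζ ^ 2, -2, 3] i * (α i : ℂ) = 0 ↔ SolvesSystem α := by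
  have hpair : ∑ i : Fin 5, ![1, ζ, ζ ^ 2, -2, 3] i * (α i : ℂ) =
      (((α 0 : ℝ) - α 2 - 2 * α 3 + 3 * α 4 : ℝ) : ℂ) + (((α 1 : ℝ) - α 2 : ℝ) : ℂ) * ζ := by
    simp only [Fin.sum_univ_five, Matrix.cons_val]
    push_cast
    linear_combination (α 2 : ℂ) * hζ.sq_add_self_add_one
  rw [hpair, Complex.ofReal_add_ofReal_mul_eq_zero_iff hζ.im_ne_zero_of_three, SolvesSystem,
    ← Nat.cast_inj (R := ℝ), ← Nat.cast_inj (R := ℝ) (m := α 1)]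
  push_cast
  constructor <;> rintro ⟨h₁, h₂⟩ <;> constructor <;> linarith

theorem eq_zero_or_eq_zero_of_forall_le {A : Type*} [AddCommMonoid A] [PartialOrder A]
    [CanonicallyOrderedAdd A] [IsLeftCancelAdd A] {M : Set A} {v : A}
    (hv : ∀ a ≤ v, a ∈ M → a = 0 ∨ a = v) {a b : A} (ha : a ∈ M) (hab : v = a + b) :
    a = 0 ∨ b = 0 := by
  rcases hv a (hab ▸ le_self_add) ha with h | rfl
  · exact Or.inl h
  · exact Or.inr (left_eq_add.mp hab)

theorem solvesSystem_minimal :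
    ∀ v ∈ ([![0,0,0,3,2], ![0,1,1,1,1], ![0,3,3,0,1],
             ![1,0,0,2,1], ![1,1,1,0,0], ![2,0,0,1,0]] : List (Fin 5 → ℕ)),
      SolvesSystem v ∧ v ≠ 0 ∧ ∀ a ∈ Finset.Iic v, SolvesSystem a → a = 0 ∨ a = v := by
  decide

/-- For `λ = (1, ζ, ζ², −2, 3)` with `ζ` a primitive third root of unity, the
six listed vectors belong to `M_λ = {α ∈ ℕ⁵ : ⟨λ,α⟩ = 0}` and each is
irreducible in `M_λ` (not a sum of two nonzero elements of `M_λ`). -/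
theorem stmt13 (ζ : ℂ) (hζ : IsPrimitiveRoot ζ 3)
    (lam : Fin 5 → ℂ) (hlam : lam = ![1, ζ, ζ^2, -2, 3])
    (M : Set (Fin 5 → ℕ))
    (hM : M = {α | ∑ i : Fin 5, lam i * (α i : ℂ) = 0}) :
    ∀ v ∈ ([![0,0,0,3,2], ![0,1,1,1,1], ![0,3,3,0,1],
             ![1,0,0,2,1], ![1,1,1,0,0], ![2,0,0,1,0]] : List (Fin 5 → ℕ)),
      v ∈ M ∧ v ≠ 0 ∧
        ∀ a ∈ M, ∀ b ∈ M, v = a + b → a = 0 ∨ b = 0 := by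
  have hmem : ∀ α, α ∈ M ↔ SolvesSystem α := by
    subst hlam hM
    exact pairing_eq_zero_iff_solvesSystem hζ
  intro v hv
  obtain ⟨hsys, hne, hmin⟩ := solvesSystem_minimal v hv
  refine ⟨(hmem v).2 hsys, hne, fun a ha b _ hab => ?_⟩
  exact eq_zero_or_eq_zero_of_forall_le
    (fun a hle ha => hmin a (Finset.mem_Iic.2 hle) ((hmem a).1 ha)) ha hab
end

section
/- Let λ = (1, ζ, ζ², −2, 3) with ζ a primitive third root of unity. The ℤ-submodule of ℤ⁵ spanned by M_λ = { α ∈ ℕ⁵ : ⟨λ,α⟩ = 0 } has rank 3, and it is generated by the three vectors (0,0,0,3,2), (0,1,1,1,1), (1,0,0,2,1). -/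
/-- For `λ = (1, ζ, ζ², −2, 3)` with `ζ` a primitive third root of unity, the
`ℤ`-submodule of `ℤ⁵` spanned by `M_λ` has rank `3` and is generated by
`(0,0,0,3,2)`, `(0,1,1,1,1)`, `(1,0,0,2,1)`. -/
theorem stmt14 (ζ : ℂ) (hζ : IsPrimitiveRoot ζ 3)
    (lam : Fin 5 → ℂ) (hlam : lam = ![1, ζ, ζ^2, -2, 3])
    (R : Submodule ℤ (Fin 5 → ℤ))
    (hR : R = Submodule.span ℤ
      {β : Fin 5 → ℤ | ∃ α : Fin 5 → ℕ, (∀ i, β i = (α i : ℤ)) ∧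
        ∑ i : Fin 5, lam i * (α i : ℂ) = 0}) :
    Module.finrank ℤ R = 3 ∧
      R = Submodule.span ℤ
        {![0,0,0,3,2], ![0,1,1,1,1], ![1,0,0,2,1]} := by
  -- ζ² + ζ + 1 = 0
  have h3 : ζ ^ 3 = 1 := hζ.pow_eq_one
  have hne : ζ ≠ 1 := hζ.ne_one (by norm_num)
  have hz : ζ ^ 2 + ζ + 1 = 0 := by
    have h : (ζ - 1) * (ζ ^ 2 + ζ + 1) = 0 := by linear_combination h3
    rcases mul_eq_zero.mp h with h' | h'
    · exact absurd (sub_eq_zero.mp h') hne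
    · exact h'
  -- ζ is not real
  have him : ζ.im ≠ 0 := by
    intro h
    have h1 := congrArg Complex.re hz
    simp [Complex.add_re, Complex.sq_norm, pow_two, Complex.mul_re, h] at h1
    nlinarith [sq_nonneg (ζ.re + 1/2)]
  set v1 : Fin 5 → ℤ := ![0,0,0,3,2] with hv1
  set v2 : Fin 5 → ℤ := ![0,1,1,1,1] with hv2
  set v3 : Fin 5 → ℤ := ![1,0,0,2,1] with hv3
  have hmem1 : v1 ∈ Submodule.span ℤ ({v1, v2, v3} : Set (Fin 5 → ℤ)) :=
    Submodule.subset_span (by simp)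
  have hmem2 : v2 ∈ Submodule.span ℤ ({v1, v2, v3} : Set (Fin 5 → ℤ)) :=
    Submodule.subset_span (by simp)
  have hmem3 : v3 ∈ Submodule.span ℤ ({v1, v2, v3} : Set (Fin 5 → ℤ)) :=
    Submodule.subset_span (by simp)
  have hspan : R = Submodule.span ℤ ({v1, v2, v3} : Set (Fin 5 → ℤ)) := by
    rw [hR]
    apply le_antisymm
    · rw [Submodule.span_le]
      rintro β ⟨α, hβ, hsum⟩
      rw [Fin.sum_univ_five] at hsum
      simp only [hlam, Matrix.cons_val_zero, Matrix.cons_val_one, Matrix.head_cons,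
        Matrix.cons_val_two, Matrix.tail_cons, Matrix.cons_val_three,
        Matrix.cons_val_four] at hsum
      -- integer constraints
      have hc : (((α 0 : ℤ) - (α 2 : ℤ) - 2 * (α 3 : ℤ) + 3 * (α 4 : ℤ) : ℤ) : ℂ)
          + ζ * (((α 1 : ℤ) - (α 2 : ℤ) : ℤ) : ℂ) = 0 := by
        push_cast
        linear_combination hsum - (α 2 : ℂ) * hz
      have hXzero : (α 1 : ℤ) - (α 2 : ℤ) = 0 := by
        have h := congrArg Complex.im hc
        simp [Complex.add_im, Complex.mul_im] at h
        rcases h with h | h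
        · exact absurd h him
        · exact_mod_cast h
      have hYzero : (α 0 : ℤ) - (α 2 : ℤ) - 2 * (α 3 : ℤ) + 3 * (α 4 : ℤ) = 0 := by
        rw [hXzero] at hc
        simp only [Int.cast_zero, mul_zero, add_zero] at hc
        exact_mod_cast hc
      have h12 : (α 1 : ℤ) = (α 2 : ℤ) := by linarith
      -- β = c1 • v1 + c2 • v2 + c3 • v3
      have hβeq : β = ((α 3 : ℤ) - (α 4 : ℤ) - (α 0 : ℤ)) • v1 + (α 2 : ℤ) • v2
          + (α 0 : ℤ) • v3 := by
        funext i
        fin_cases i <;>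
          simp [hβ 0, hβ 1, hβ 2, hβ 3, hβ 4, hv1, hv2, hv3] <;> linarith
      rw [hβeq]
      exact Submodule.add_mem _ (Submodule.add_mem _ (Submodule.smul_mem _ _ hmem1)
        (Submodule.smul_mem _ _ hmem2)) (Submodule.smul_mem _ _ hmem3)
    · rw [Submodule.span_le]
      rintro β hβ
      rcases hβ with h | h | h
      · refine Submodule.subset_span ⟨![0,0,0,3,2], ?_, ?_⟩
        · intro i; subst h; fin_cases i <;> simp [hv1]
        · rw [Fin.sum_univ_five]; simp [hlam]; ring
      · refine Submodule.subset_span ⟨![0,1,1,1,1], ?_, ?_⟩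
        · intro i; subst h; fin_cases i <;> simp [hv2]
        · rw [Fin.sum_univ_five]; simp [hlam]; linear_combination hz
      · refine Submodule.subset_span ⟨![1,0,0,2,1], ?_, ?_⟩
        · intro i; simp at h; subst h; fin_cases i <;> simp [hv3]
        · rw [Fin.sum_univ_five]; simp [hlam]; ring
  refine ⟨?_, by simpa [hv1, hv2, hv3] using hspan⟩
  -- rank computation
  have hindep : LinearIndependent ℤ ![v1, v2, v3] := by
    rw [Fintype.linearIndependent_iff]
    intro g hg
    have h0 := congrFun hg 0
    have h1 := congrFun hg 1
    have h3' := congrFun hg 3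
    simp [Fin.sum_univ_three, hv1, hv2, hv3] at h0 h1 h3'
    intro i
    fin_cases i <;> simp <;> omega
  have hrange : Set.range ![v1, v2, v3] = ({v1, v2, v3} : Set (Fin 5 → ℤ)) := by
    ext x
    simp [Matrix.range_cons, Matrix.range_empty]
    tauto
  rw [hspan, ← hrange]
  rw [finrank_span_eq_card hindep]
  simp
end
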